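/- For the (α,α) composition structure, the composition probability function p°_{α,α}(λ_1,...,λ_k) = f°(λ°) α^k ∏_{j=1}^k (1−α)_{λ_j − 1} / (α)_n, with f°(λ°) = n!/(λ_1!···λ_k!), is a symmetric function of (λ_1,...,λ_k) for each fixed k, and summing over all compositions of n gives total probability 1. -/

import Mathlib

/-- Rising factorial `(z)_k = z (z+1) ⋯ (z+k-1)`. -/
noncomputable def rpoch (z : ℝ) (k : ℕ) : ℝ := ∏ i ∈ Finset.range k, (z + i)

/-- The `(α,α)` composition probability function
`p°_{α,α}(λ₁,…,λ_k) = f°(λ) α^k ∏_j (1−α)_{λ_j−1} / (α)_n`, where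
`f°(λ) = n!/(λ₁!⋯λ_k!)` and `n = λ₁+⋯+λ_k`. -/
noncomputable def pAlphaAlpha (α : ℝ) (l : List ℕ) : ℝ :=
  ((l.sum.factorial : ℝ) / ((l.map Nat.factorial).prod : ℝ)) * α ^ l.length *
    (l.map (fun m => rpoch (1 - α) (m - 1))).prod / rpoch α l.sum

/-!
Symmetry is immediate: every ingredient of `p°_{α,α}` depends on the parts only through their
sum, their number and products over them.

For the total mass, clear the denominator: `w(λ) = p°_{α,α}(λ) · (α)_n`. Splitting off the
first block gives `w(i+1, μ) = C(i+1+j, i+1) α (1-α)_i w(μ)` for `μ ⊨ j`, so by strong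
induction `∑_{λ ⊨ n+1} w(λ) = (α)_{n+1}` reduces to
`∑_{i+j=n} C(n+1, i+1) α (1-α)_i (α)_j = (α)_{n+1}`.
Since `α (1-α)_i = -(-α)_{i+1}`, this is the Chu–Vandermonde identity for rising factorials
evaluated at `(-α) + α = 0`, where `(0)_{n+1} = 0`.
-/

open Finset Nat

@[simp] lemma rpoch_zero (z : ℝ) : rpoch z 0 = 1 := prod_range_zero _

lemma rpoch_succ (z : ℝ) (k : ℕ) : rpoch z (k + 1) = rpoch z k * (z + k) :=
  prod_range_succ _ _

lemma rpoch_succ_left (z : ℝ) (k : ℕ) : rpoch z (k + 1) = z * rpoch (z + 1) k := by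
  simp only [rpoch, prod_range_succ', Nat.cast_succ, Nat.cast_zero, add_zero, mul_comm z]
  exact congrArg (· * z) (prod_congr rfl fun _ _ => by ring)

lemma rpoch_pos {z : ℝ} (hz : 0 < z) (k : ℕ) : 0 < rpoch z k :=
  prod_pos fun _ _ => by positivity

lemma rpoch_add (a b : ℝ) (n : ℕ) :
    rpoch (a + b) n =
      ∑ ij ∈ antidiagonal n, (n.choose ij.1 : ℝ) * (rpoch a ij.1 * rpoch b ij.2) := by
  induction n with
  | zero => simp
  | succ n ih =>
    rw [sum_antidiagonal_choose_succ_mul (fun i j => rpoch a i * rpoch b j), ← sum_add_distrib,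
      rpoch_succ, ih, sum_mul]
    refine sum_congr rfl fun ij hij => ?_
    have hsum : ij.1 + ij.2 = n := HasAntidiagonal.mem_antidiagonal.mp hij
    rw [rpoch_succ, rpoch_succ, choose_symm_of_eq_add hsum.symm, ← hsum]
    push_cast
    ring

lemma sum_antidiagonal_choose_mul_rpoch (α : ℝ) (n : ℕ) :
    ∑ ij ∈ antidiagonal n,
        ((n + 1).choose (ij.1 + 1) : ℝ) * (α * rpoch (1 - α) ij.1) * rpoch α ij.2 =
      rpoch α (n + 1) := by
  have hvanish := rpoch_add (-α) α (n + 1)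
  rw [neg_add_cancel, rpoch_succ_left, zero_mul, Nat.sum_antidiagonal_succ] at hvanish
  simp only [rpoch_succ_left (-α), neg_add_eq_sub, choose_zero_right, cast_one, rpoch_zero,
    one_mul, neg_mul, mul_neg, sum_neg_distrib, mul_assoc] at hvanish ⊢
  linarith

noncomputable def alphaAlphaWeight (α : ℝ) (l : List ℕ) : ℝ :=
  ((l.sum)! / (l.map (·!)).prod : ℝ) * α ^ l.length * (l.map fun m => rpoch (1 - α) (m - 1)).prod

lemma pAlphaAlpha_eq_alphaAlphaWeight_div (α : ℝ) (l : List ℕ) :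
    pAlphaAlpha α l = alphaAlphaWeight α l / rpoch α l.sum := rfl

lemma sum_factorial_div_prod_factorial_cons (m : ℕ) (l : List ℕ) :
    ((m + l.sum)! / ((m :: l).map (·!)).prod : ℝ) =
      (m + l.sum).choose m * ((l.sum)! / (l.map (·!)).prod) := by
  have hprod : ((l.map (·!)).prod : ℝ) ≠ 0 := by
    simpa [List.prod_eq_zero_iff] using fun x _ => x.factorial_ne_zero
  rw [cast_add_choose, List.map_cons, List.prod_cons]
  push_cast
  field_simp

lemma alphaAlphaWeight_cons (α : ℝ) (i : ℕ) (l : List ℕ) :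
    alphaAlphaWeight α ((i + 1) :: l) =
      (i + 1 + l.sum).choose (i + 1) * (α * rpoch (1 - α) i) * alphaAlphaWeight α l := by
  rw [alphaAlphaWeight, alphaAlphaWeight, List.sum_cons, sum_factorial_div_prod_factorial_cons]
  simp only [List.length_cons, List.map_cons, List.prod_cons, add_tsub_cancel_right, pow_succ]
  ring

lemma alphaAlphaWeight_perm (α : ℝ) {l l' : List ℕ} (h : l.Perm l') :
    alphaAlphaWeight α l = alphaAlphaWeight α l' := by
  simp only [alphaAlphaWeight, h.sum_eq, h.length_eq, (h.map _).prod_eq]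

lemma sum_composition_succ {M : Type*} [AddCommMonoid M] (f : List ℕ → M) (n : ℕ) :
    ∑ c : Composition (n + 1), f c.blocks =
      ∑ ij ∈ antidiagonal n, ∑ d : Composition ij.2, f ((ij.1 + 1) :: d.blocks) := by
  rw [sum_sigma']
  symm
  refine sum_bij (fun x hx => ⟨(x.1.1 + 1) :: x.2.blocks, ?_, ?_⟩) (fun _ _ => mem_univ _)
    ?_ ?_ fun _ _ => rfl
  · intro k hk
    rcases List.mem_cons.mp hk with rfl | hk
    exacts [succ_pos _, x.2.blocks_pos hk]
  · have hij := (mem_sigma.mp hx).1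
    rw [HasAntidiagonal.mem_antidiagonal] at hij
    rw [List.sum_cons, x.2.blocks_sum]
    omega
  · rintro ⟨⟨i, j⟩, d⟩ hij ⟨⟨i', j'⟩, d'⟩ hij' heq
    simp only [mem_sigma, HasAntidiagonal.mem_antidiagonal] at hij hij'
    simp only [Composition.mk.injEq, List.cons.injEq, add_left_inj] at heq
    obtain ⟨rfl, hblocks⟩ := heq
    obtain rfl : j = j' := by omega
    rw [Composition.ext hblocks]
  · intro c _
    obtain ⟨k, t, hc⟩ := List.exists_cons_of_ne_nil (c.blocks_eq_nil.not.mpr (succ_ne_zero n))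
    obtain ⟨i, rfl⟩ := exists_add_one_eq.mpr (c.blocks_pos (hc ▸ List.mem_cons_self))
    have hsum : i + 1 + t.sum = n + 1 := by rw [← List.sum_cons, ← hc, c.blocks_sum]
    refine ⟨⟨(i, t.sum), ⟨t, fun hk => c.blocks_pos (hc ▸ List.mem_cons_of_mem _ hk), rfl⟩⟩,
      ?_, Composition.ext hc.symm⟩
    simp only [mem_sigma, HasAntidiagonal.mem_antidiagonal, mem_univ, and_true]
    omega

lemma sum_alphaAlphaWeight_composition (α : ℝ) (n : ℕ) :
    ∑ c : Composition n, alphaAlphaWeight α c.blocks = rpoch α n := by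
  induction n using Nat.strong_induction_on with
  | _ n ih =>
    cases n with
    | zero =>
      have hnil (c : Composition 0) : c.blocks = [] := c.blocks_eq_nil.mpr rfl
      simp [hnil, composition_card, alphaAlphaWeight]
    | succ n =>
      rw [sum_composition_succ, ← sum_antidiagonal_choose_mul_rpoch]
      refine sum_congr rfl fun ij hij => ?_
      have hsum : ij.1 + 1 + ij.2 = n + 1 := by
        rw [HasAntidiagonal.mem_antidiagonal] at hij; omega
      simp only [alphaAlphaWeight_cons, Composition.blocks_sum, hsum, ← mul_sum]
      rw [ih ij.2 (by omega)]

theorem alphaAlpha_symmetric_and_sums_to_one_general (α : ℝ) (h0 : 0 < α) :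
    (∀ l l' : List ℕ, l.Perm l' → pAlphaAlpha α l = pAlphaAlpha α l') ∧
    (∀ n : ℕ, 1 ≤ n → ∑ c : Composition n, pAlphaAlpha α c.blocks = 1) := by
  refine ⟨fun l l' h => ?_, fun n _ => ?_⟩
  · simp only [pAlphaAlpha_eq_alphaAlphaWeight_div, alphaAlphaWeight_perm α h, h.sum_eq]
  · simp only [pAlphaAlpha_eq_alphaAlphaWeight_div, Composition.blocks_sum, ← sum_div,
      sum_alphaAlphaWeight_composition]
    exact div_self (rpoch_pos h0 n).ne'

/-- The `(α,α)` CPF is a symmetric function of the parts (for each fixed number of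
parts), and summing it over all compositions of `n` gives total probability `1`. -/
theorem alphaAlpha_symmetric_and_sums_to_one (α : ℝ) (h0 : 0 < α) (h1 : α < 1) :
    (∀ l l' : List ℕ, l.Perm l' → pAlphaAlpha α l = pAlphaAlpha α l') ∧
    (∀ n : ℕ, 1 ≤ n → ∑ c : Composition n, pAlphaAlpha α c.blocks = 1) :=
  alphaAlpha_symmetric_and_sums_to_one_general α h0
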